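/- arXiv:2507.12634 — 4 statements merged into one kernel-verified Lean document; each statement's English description precedes it below -/
import Mathlib

section
/- If I(1) = 0 and for all n > 1, I(n) = 1 + (1/n) * Σ_{i=1}^{n} I(i), then for all n ≥ 2, I(n) = 1 + Σ_{i=1}^{n-1} 1/i (i.e., one plus the (n-1)-th harmonic number). -/
/-!
Subtracting the recurrence at `n` (multiplied by `n`) from the one at `n + 1` (multiplied by
`n + 1`) leaves `n * I (n + 1) = n * I n + 1`, so `I` increases by `1 / n` from `n` to `n + 1`.
Since `I 2 = 2 + I 1 = 2`, summing these increments gives `I n = 1 + harmonic (n - 1)`.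
-/

section

variable {I : ℕ → ℝ}
  (hrec : ∀ n : ℕ, 1 < n → I n = 1 + (1 / (n : ℝ)) * ∑ i ∈ Finset.Icc 1 n, I i)
include hrec

lemma sum_Icc_eq_mul_sub_one {n : ℕ} (hn : 1 < n) :
    ∑ i ∈ Finset.Icc 1 n, I i = n * (I n - 1) := by
  have hn0 : (n : ℝ) ≠ 0 := by positivity
  rw [hrec n hn]
  field_simp
  ring

lemma succ_eq_add_inv {n : ℕ} (hn : 1 < n) : I (n + 1) = I n + (n : ℝ)⁻¹ := by
  have hn0 : (n : ℝ) ≠ 0 := by positivity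
  have hsucc := sum_Icc_eq_mul_sub_one hrec (n := n + 1) (by omega)
  rw [Finset.sum_Icc_succ_top (by omega), sum_Icc_eq_mul_sub_one hrec hn] at hsucc
  push_cast at hsucc
  field_simp
  linarith

lemma eq_one_add_harmonic (h1 : I 1 = 0) {n : ℕ} (hn : 2 ≤ n) :
    I n = 1 + (harmonic (n - 1) : ℝ) := by
  induction n, hn using Nat.le_induction with
  | base =>
    have h2 := hrec 2 (by norm_num)
    rw [show Finset.Icc 1 2 = {1, 2} by decide, Finset.sum_pair (by norm_num), h1] at h2
    norm_num [harmonic] at h2 ⊢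
    linarith
  | succ n hn ih =>
    obtain ⟨m, rfl⟩ : ∃ m, n = m + 1 := ⟨n - 1, by omega⟩
    rw [succ_eq_add_inv hrec hn, ih, Nat.add_sub_cancel, Nat.add_sub_cancel, harmonic_succ]
    push_cast
    ring

end

theorem stmt_0 (I : ℕ → ℝ) (h1 : I 1 = 0)
    (hrec : ∀ n : ℕ, 1 < n → I n = 1 + (1 / (n : ℝ)) * ∑ i ∈ Finset.Icc 1 n, I i) :
    ∀ n : ℕ, 2 ≤ n → I n = 1 + ∑ i ∈ Finset.Icc 1 (n - 1), (1 : ℝ) / (i : ℝ) := by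
  intro n hn
  simp only [eq_one_add_harmonic hrec h1 hn, harmonic_eq_sum_Icc, Rat.cast_sum, Rat.cast_inv,
    Rat.cast_natCast, one_div]
end

section
/- For every natural N ≥ 2 and real δ with 0 < δ < 1, (1 - 1/N + δ/N)^N - (1 - 1/N)^N > δ / (2e). -/
/-! With `b = 1 - 1/N`, Bernoulli's inequality gives `(b + δ/N)^N - b^N ≥ δ b^(N-1)`, and
`b^(N-1) = (1 + 1/(N-1))^-(N-1) ≥ e⁻¹`, which beats `1/(2e)` with room to spare. -/

open Real

theorem exp_neg_one_le_one_sub_div_pow_pred (n : ℕ) : exp (-1) ≤ (1 - 1 / (n : ℝ)) ^ (n - 1) := by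
  rcases n with _ | m
  · simp
  rcases m.eq_zero_or_pos with rfl | hm
  · simp
  have hrecip : (1 - 1 / ((m + 1 : ℕ) : ℝ)) ^ (m + 1 - 1) = ((1 + (m : ℝ)⁻¹) ^ m)⁻¹ := by
    rw [← inv_pow, Nat.add_sub_cancel]
    congr 1
    have : (m : ℝ) ≠ 0 := by positivity
    push_cast
    field_simp
    ring
  rw [hrecip, exp_neg]
  exact inv_anti₀ (by positivity) one_add_inv_pow_le_exp

theorem stmt_6_general (N : ℕ) (hN : 2 ≤ N) (δ : ℝ) (hδ0 : 0 < δ) :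
    (1 - 1 / (N : ℝ) + δ / N) ^ N - (1 - 1 / (N : ℝ)) ^ N > δ / (2 * Real.exp 1) := by
  set b : ℝ := 1 - 1 / N
  have hN0 : (N : ℝ) ≠ 0 := by positivity
  have hb : 0 ≤ b :=
    sub_nonneg.mpr (div_le_one_of_le₀ (by exact_mod_cast (by omega : 1 ≤ N)) (by positivity))
  have bernoulli : b ^ N + δ * b ^ (N - 1) ≤ (b + δ / N) ^ N := by
    have := pow_add_mul_le_add_pow hb (by positivity : 0 ≤ 2 * b + δ / N) N
    rwa [mul_right_comm, mul_div_cancel₀ _ hN0] at this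
  calc δ / (2 * exp 1) < δ / exp 1 := by gcongr; linarith [exp_pos 1]
    _ = δ * exp (-1) := by rw [exp_neg, div_eq_mul_inv]
    _ ≤ δ * b ^ (N - 1) := by gcongr; exact exp_neg_one_le_one_sub_div_pow_pred N
    _ ≤ (b + δ / N) ^ N - b ^ N := by linarith

theorem stmt_6 (N : ℕ) (hN : 2 ≤ N) (δ : ℝ) (hδ0 : 0 < δ) (hδ1 : δ < 1) :
    (1 - 1 / (N : ℝ) + δ / N) ^ N - (1 - 1 / (N : ℝ)) ^ N > δ / (2 * Real.exp 1) :=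
  stmt_6_general N hN δ hδ0
end

section
/- For 0 < δ < 1 and real N with N ≥ 2/(1 - e^{-2δ}), we have 1 - (1 - (1-δ)/N)^N ≤ 1 - e^{δ-1} * (1 + e^{-2δ})/2. -/
/-!
Write `c = 1 - δ`. Since `(1 - c/N)^N (1 + c/N)^N = (1 - c²/N²)^N ≥ 1 - c²/N` by Bernoulli's
inequality and `(1 + c/N)^N ≤ e^c`, we get `(1 - c/N)^N ≥ e^{-c} (1 - c²/N)`. The hypothesis on `N`
says `1/N ≤ (1 - e^{-2δ})/2`, hence `1 - c²/N ≥ 1 - 1/N ≥ (1 + e^{-2δ})/2`.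
-/

open Real

lemma Real.one_add_div_rpow_le_exp {x N : ℝ} (hN : 0 < N) (hx : 0 ≤ 1 + x / N) :
    (1 + x / N) ^ N ≤ exp x := calc
  (1 + x / N) ^ N ≤ exp (x / N) ^ N := by
    gcongr
    linarith [add_one_le_exp (x / N)]
  _ = exp x := by rw [← exp_mul, div_mul_cancel₀ x hN.ne']

lemma Real.exp_mul_one_sub_sq_div_le_one_add_div_rpow {x N : ℝ} (hN : 1 ≤ N) (hx : |x| ≤ N) :
    exp x * (1 - x ^ 2 / N) ≤ (1 + x / N) ^ N := by
  have hN0 : 0 < N := by linarith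
  have hxN : |x / N| ≤ 1 := by
    rw [abs_div, abs_of_pos hN0]
    exact div_le_one_of_le₀ hx hN0.le
  obtain ⟨hxl, hxu⟩ := abs_le.mp hxN
  have hplus : 0 ≤ 1 + x / N := by linarith
  have hminus : 0 ≤ 1 + -x / N := by rw [neg_div]; linarith
  have bernoulli : 1 - x ^ 2 / N ≤ (1 + x / N) ^ N * (1 + -x / N) ^ N := by
    rw [← mul_rpow hplus hminus]
    convert one_add_mul_self_le_rpow_one_add (s := -(x / N) ^ 2) _ hN using 1
    · field_simp
      ring
    · congr 1
      ring
    · linarith [(sq_le_one_iff_abs_le_one _).mpr hxN]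
  calc exp x * (1 - x ^ 2 / N)
      ≤ exp x * ((1 + x / N) ^ N * (1 + -x / N) ^ N) := by gcongr
    _ ≤ exp x * ((1 + x / N) ^ N * exp (-x)) := by
        gcongr
        exact one_add_div_rpow_le_exp hN0 hminus
    _ = (1 + x / N) ^ N := by rw [mul_left_comm, ← exp_add, add_neg_cancel, exp_zero, mul_one]

theorem stmt_8 (δ : ℝ) (hδ0 : 0 < δ) (hδ1 : δ < 1) (N : ℝ)
    (hN : N ≥ 2 / (1 - Real.exp (-2 * δ))) :
    1 - (1 - (1 - δ) / N) ^ N ≤ 1 - Real.exp (δ - 1) * (1 + Real.exp (-2 * δ)) / 2 := by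
  have hε : 0 < 1 - exp (-2 * δ) := by
    rw [sub_pos, exp_lt_one_iff]
    linarith
  have hN2 : 2 ≤ N := le_trans (by rw [le_div_iff₀ hε]; linarith [exp_pos (-2 * δ)]) hN
  have hinv : 1 / N ≤ (1 - exp (-2 * δ)) / 2 := by
    simpa only [one_div_div] using one_div_le_one_div_of_le (by positivity) hN
  have hsq : (δ - 1) ^ 2 / N ≤ 1 / N := by
    gcongr
    nlinarith
  have hbound := exp_mul_one_sub_sq_div_le_one_add_div_rpow (x := δ - 1) (N := N)
    (by linarith) (abs_le.mpr ⟨by linarith, by linarith⟩)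
  calc 1 - (1 - (1 - δ) / N) ^ N = 1 - (1 + (δ - 1) / N) ^ N := by ring_nf
    _ ≤ 1 - exp (δ - 1) * (1 - (δ - 1) ^ 2 / N) := by linarith
    _ ≤ 1 - exp (δ - 1) * (1 + exp (-2 * δ)) / 2 := by
        rw [mul_div_assoc]
        gcongr
        linarith
end

section
/- In the Swap procedure, given the current candidate x with Y = {y ∈ S : y ≤ x} nonempty, and recursively partitioning uniformly at random and recursing on the half containing an element of Y (preferring the half that tests positive), each element of Y is returned with probability exactly 1/|Y|. -/
open Finset

/-- The set of possible first halves of a balanced random partition of `A`: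
subsets `A₀ ⊆ A` with `||A₀| - |A \ A₀|| ≤ 1` and both parts nonempty. -/
def halves {α : Type*} [DecidableEq α] (A : Finset α) : Finset (Finset α) :=
  A.powerset.filter (fun A₀ =>
    A₀.Nonempty ∧ (A \ A₀).Nonempty ∧ |(A₀.card : ℤ) - ((A \ A₀).card : ℤ)| ≤ 1)

lemma mem_halves {α : Type*} [DecidableEq α] {A A₀ : Finset α} :
    A₀ ∈ halves A ↔ A₀ ⊆ A ∧ A₀.Nonempty ∧ (A \ A₀).Nonempty ∧
      |(A₀.card : ℤ) - ((A \ A₀).card : ℤ)| ≤ 1 := by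
  simp [halves, and_assoc]

lemma halves_nonempty {α : Type*} [DecidableEq α] {A : Finset α} (h : 2 ≤ A.card) :
    (halves A).Nonempty := by
  obtain ⟨A₀, hsub, hcard⟩ := Finset.exists_subset_card_eq
    (s := A) (n := A.card / 2) (by omega)
  refine ⟨A₀, mem_halves.mpr ⟨hsub, ?_, ?_, ?_⟩⟩
  · rw [← Finset.card_pos]; omega
  · rw [← Finset.card_pos, Finset.card_sdiff_of_subset hsub]; omega
  · rw [Finset.card_sdiff_of_subset hsub, abs_le]; omega

lemma map_swap_subset {α : Type*} [DecidableEq α] {S A₀ : Finset α} {y y' : α}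
    (hy : y ∈ S) (hy' : y' ∈ S) (h : A₀ ⊆ S) :
    A₀.map (Equiv.swap y y').toEmbedding ⊆ S := by
  intro z hz
  simp only [mem_map, Equiv.coe_toEmbedding] at hz
  obtain ⟨w, hw, rfl⟩ := hz
  rcases eq_or_ne w y with rfl | h1
  · simpa [Equiv.swap_apply_left] using hy'
  rcases eq_or_ne w y' with rfl | h2
  · simpa [Equiv.swap_apply_right] using hy
  · rw [Equiv.swap_apply_of_ne_of_ne h1 h2]; exact h hw

lemma map_swap_mem_halves {α : Type*} [DecidableEq α] {S A₀ : Finset α} {y y' : α}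
    (hy : y ∈ S) (hy' : y' ∈ S) (h : A₀ ∈ halves S) :
    A₀.map (Equiv.swap y y').toEmbedding ∈ halves S := by
  rw [mem_halves] at h ⊢
  obtain ⟨hsub, hne, hne', hbal⟩ := h
  have hsub' := map_swap_subset hy hy' hsub
  have hc : (A₀.map (Equiv.swap y y').toEmbedding).card = A₀.card := Finset.card_map _
  have h1 : (S \ A₀).card = S.card - A₀.card := Finset.card_sdiff_of_subset hsub
  have h2 : (S \ A₀.map (Equiv.swap y y').toEmbedding).card = S.card - A₀.card := by
    rw [Finset.card_sdiff_of_subset hsub', hc]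
  have hA₀pos : 0 < A₀.card := Finset.card_pos.mpr hne
  have hdpos : 0 < (S \ A₀).card := Finset.card_pos.mpr hne'
  refine ⟨hsub', hne.map, ?_, ?_⟩
  · rw [← Finset.card_pos]; omega
  · rw [abs_le] at hbal ⊢; omega

lemma map_swap_swap {α : Type*} [DecidableEq α] (y y' : α) (A : Finset α) :
    (A.map (Equiv.swap y y').toEmbedding).map (Equiv.swap y y').toEmbedding = A := by
  ext z
  simp only [mem_map, Equiv.coe_toEmbedding]
  constructor
  · rintro ⟨w, ⟨u, hu, rfl⟩, rfl⟩
    rwa [Equiv.swap_apply_self]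
  · intro hz
    exact ⟨Equiv.swap y y' z, ⟨z, hz, rfl⟩, Equiv.swap_apply_self _ _ _⟩

lemma mem_map_swap_right {α : Type*} [DecidableEq α] (y y' : α) (A : Finset α) :
    y' ∈ A.map (Equiv.swap y y').toEmbedding ↔ y ∈ A := by
  simp only [mem_map, Equiv.coe_toEmbedding]
  constructor
  · rintro ⟨w, hw, hwz⟩
    have : w = y := by
      have h := congrArg (Equiv.swap y y') hwz
      rwa [Equiv.swap_apply_self, Equiv.swap_apply_right] at h
    rwa [this] at hw
  · intro h; exact ⟨y, h, Equiv.swap_apply_left y y'⟩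

lemma filter_map_swap {α : Type*} [DecidableEq α] [LinearOrder α] {x y y' : α}
    (hy : y ≤ x) (hy' : y' ≤ x) (A : Finset α) :
    (A.map (Equiv.swap y y').toEmbedding).filter (fun z => z ≤ x)
      = (A.filter (fun z => z ≤ x)).map (Equiv.swap y y').toEmbedding := by
  have key : ∀ z : α, Equiv.swap y y' z ≤ x ↔ z ≤ x := by
    intro z
    rcases eq_or_ne z y with rfl | h1
    · simp [Equiv.swap_apply_left, hy, hy']
    rcases eq_or_ne z y' with rfl | h2
    · simp [Equiv.swap_apply_right, hy, hy']
    · rw [Equiv.swap_apply_of_ne_of_ne h1 h2]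
  ext z
  simp only [mem_filter, mem_map, Equiv.coe_toEmbedding]
  constructor
  · rintro ⟨⟨w, hw, rfl⟩, hz⟩
    exact ⟨w, ⟨hw, (key w).mp hz⟩, rfl⟩
  · rintro ⟨w, ⟨hw, hwx⟩, rfl⟩
    exact ⟨⟨w, hw, rfl⟩, (key w).mpr hwx⟩

theorem stmt_18 {α : Type*} [DecidableEq α] [LinearOrder α] (x : α)
    (swap : Finset α → PMF α)
    -- base case of Swap: a singleton set returns its element
    (hbase : ∀ a : α, swap {a} = PMF.pure a)
    -- recursive case: partition uniformly at random into halves, recurse on the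
    -- half containing an element ≤ x (preferring the positive group test on A₀)
    (hrec : ∀ (A : Finset α), 2 ≤ A.card → ∀ (hne : (halves A).Nonempty),
      swap A = (PMF.uniformOfFinset (halves A) hne).bind
        (fun A₀ => if ∃ y ∈ A₀, y ≤ x then swap A₀ else swap (A \ A₀))) :
    ∀ (S : Finset α), (S.filter (fun y => y ≤ x)).Nonempty →
      ∀ y ∈ S.filter (fun y => y ≤ x),
        swap S y = ((S.filter (fun y => y ≤ x)).card : ENNReal)⁻¹ := by
  classical
  have main : ∀ S : Finset α, S.Nonempty →
      (∀ y, y ∉ S → swap S y = 0) ∧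
      ((S.filter (fun y => y ≤ x)).Nonempty → ∀ y ∈ S.filter (fun y => y ≤ x),
        swap S y = ((S.filter (fun y => y ≤ x)).card : ENNReal)⁻¹) := by
    intro S
    induction S using Finset.strongInduction with
    | _ S IH =>
    intro hSne
    rcases eq_or_lt_of_le (Finset.one_le_card.mpr hSne) with h1 | h2
    · -- base case : S is a singleton
      obtain ⟨a, rfl⟩ := Finset.card_eq_one.mp h1.symm
      rw [hbase]
      constructor
      · intro z hz
        rw [PMF.pure_apply, if_neg (by simpa using hz)]
      · intro hYne y hy
        simp only [mem_filter, mem_singleton] at hy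
        obtain ⟨rfl, hyx⟩ := hy
        have hfil : ({y} : Finset α).filter (fun z => z ≤ x) = {y} := by
          rw [Finset.filter_eq_self]; simpa
        rw [hfil, PMF.pure_apply, if_pos rfl]
        simp
    · -- recursive case : |S| ≥ 2
      have h2' : 2 ≤ S.card := h2
      have hne : (halves S).Nonempty := halves_nonempty h2'
      have hexp : ∀ z : α, swap S z
          = ∑ A₀ ∈ halves S, ((halves S).card : ENNReal)⁻¹ *
              (if ∃ w ∈ A₀, w ≤ x then swap A₀ z else swap (S \ A₀) z) := by
        intro z
        rw [hrec S h2' hne, PMF.bind_apply]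
        rw [tsum_eq_sum (s := halves S)
          (fun A₀ hA₀ => by rw [PMF.uniformOfFinset_apply, if_neg hA₀, zero_mul])]
        refine Finset.sum_congr rfl fun A₀ hA₀ => ?_
        rw [PMF.uniformOfFinset_apply, if_pos hA₀]
        split_ifs <;> rfl
      have hfacts : ∀ A₀ ∈ halves S, A₀ ⊂ S ∧ S \ A₀ ⊂ S := by
        intro A₀ hA₀
        rw [mem_halves] at hA₀
        obtain ⟨hsub, hA₀ne, hdne, -⟩ := hA₀
        constructor
        · refine ⟨hsub, fun hS => ?_⟩
          obtain ⟨w, hw⟩ := hdne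
          exact (mem_sdiff.mp hw).2 (hS (mem_sdiff.mp hw).1)
        · refine ⟨sdiff_subset, fun hS => ?_⟩
          obtain ⟨w, hw⟩ := hA₀ne
          exact (mem_sdiff.mp (hS (hsub hw))).2 hw
      constructor
      · -- support : swap S z = 0 for z ∉ S
        intro z hz
        rw [hexp z]
        apply Finset.sum_eq_zero
        intro A₀ hA₀
        obtain ⟨hlt, hlt'⟩ := hfacts A₀ hA₀
        have hA := IH A₀ hlt (mem_halves.mp hA₀).2.1
        have hB := IH (S \ A₀) hlt' (mem_halves.mp hA₀).2.2.1
        split_ifs with hP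
        · rw [hA.1 z (fun h => hz (hlt.subset h)), mul_zero]
        · rw [hB.1 z (fun h => hz (sdiff_subset h)), mul_zero]
      · -- main value computation
        intro hYne y hy
        obtain ⟨hyS, hyx⟩ := mem_filter.mp hy
        set Y := S.filter (fun z => z ≤ x) with hYdef
        set v : α → Finset α → ENNReal := fun z A₀ =>
          if (A₀.filter (fun w => w ≤ x)).Nonempty then
            (if z ∈ A₀ then ((A₀.filter (fun w => w ≤ x)).card : ENNReal)⁻¹ else 0)
          else (Y.card : ENNReal)⁻¹ with hvdef
        -- Step A : value of swap in terms of v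
        have stepA : ∀ z ∈ Y, swap S z =
            ((halves S).card : ENNReal)⁻¹ * ∑ A₀ ∈ halves S, v z A₀ := by
          intro z hz
          obtain ⟨hzS, hzx⟩ := mem_filter.mp hz
          rw [hexp z, ← Finset.mul_sum]
          congr 1
          refine Finset.sum_congr rfl fun A₀ hA₀ => ?_
          obtain ⟨hlt, hlt'⟩ := hfacts A₀ hA₀
          have htest : (∃ w ∈ A₀, w ≤ x) ↔ (A₀.filter (fun w => w ≤ x)).Nonempty := by
            simp [Finset.filter_nonempty_iff]
          rw [hvdef]
          by_cases hP : (A₀.filter (fun w => w ≤ x)).Nonempty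
          · rw [if_pos (htest.mpr hP)]
            simp only [if_pos hP]
            by_cases hzA : z ∈ A₀
            · rw [if_pos hzA]
              exact (IH A₀ hlt (mem_halves.mp hA₀).2.1).2 hP z (mem_filter.mpr ⟨hzA, hzx⟩)
            · rw [if_neg hzA]
              exact (IH A₀ hlt (mem_halves.mp hA₀).2.1).1 z hzA
          · rw [if_neg (fun h => hP (htest.mp h))]
            simp only [if_neg hP]
            have hfil : (S \ A₀).filter (fun w => w ≤ x) = Y := by
              ext w
              simp only [hYdef, mem_filter, mem_sdiff]
              constructor
              · tauto
              · rintro ⟨hwS, hwx⟩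
                exact ⟨⟨hwS, fun hwA => hP ⟨w, mem_filter.mpr ⟨hwA, hwx⟩⟩⟩, hwx⟩
            have hz' : z ∈ (S \ A₀).filter (fun w => w ≤ x) := by rw [hfil]; exact hz
            have hYne' : ((S \ A₀).filter (fun w => w ≤ x)).Nonempty := by
              rw [hfil]; exact hYne
            have := (IH (S \ A₀) hlt' (mem_halves.mp hA₀).2.2.1).2 hYne' z hz'
            rwa [hfil] at this
        -- Step B : symmetry, the sum is the same for all z ∈ Y
        have stepB : ∀ z ∈ Y, ∑ A₀ ∈ halves S, v z A₀ = ∑ A₀ ∈ halves S, v y A₀ := by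
          intro z hz
          obtain ⟨hzS, hzx⟩ := mem_filter.mp hz
          refine Finset.sum_equiv (Equiv.finsetCongr (Equiv.swap z y)) ?_ ?_
          · intro A₀
            simp only [Equiv.finsetCongr_apply]
            constructor
            · exact map_swap_mem_halves hzS hyS
            · intro h
              have h2 := map_swap_mem_halves hzS hyS h
              rwa [map_swap_swap] at h2
          · intro A₀ hA₀
            simp only [Equiv.finsetCongr_apply, hvdef]
            rw [filter_map_swap hzx hyx]
            simp only [Finset.map_nonempty, mem_map_swap_right, Finset.card_map]
        -- Step C : summing over all of Y gives |halves S|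
        have stepC : ∑ z ∈ Y, ∑ A₀ ∈ halves S, v z A₀ = ((halves S).card : ENNReal) := by
          rw [Finset.sum_comm]
          rw [Finset.sum_congr rfl (g := fun _ => (1 : ENNReal)) ?_]
          · rw [Finset.sum_const, nsmul_eq_mul, mul_one]
          · intro A₀ hA₀
            have hsub := (mem_halves.mp hA₀).1
            rw [hvdef]
            by_cases hP : (A₀.filter (fun w => w ≤ x)).Nonempty
            · simp only [if_pos hP]
              rw [← Finset.sum_filter]
              have hYfil : Y.filter (fun z => z ∈ A₀) = A₀.filter (fun w => w ≤ x) := by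
                ext w
                simp only [hYdef, mem_filter]
                constructor
                · rintro ⟨⟨-, hwx⟩, hwA⟩; exact ⟨hwA, hwx⟩
                · rintro ⟨hwA, hwx⟩; exact ⟨⟨hsub hwA, hwx⟩, hwA⟩
              rw [hYfil, Finset.sum_const, nsmul_eq_mul]
              exact ENNReal.mul_inv_cancel
                (Nat.cast_ne_zero.mpr (Finset.card_pos.mpr hP).ne')
                (ENNReal.natCast_ne_top _)
            · simp only [if_neg hP]
              rw [Finset.sum_const, nsmul_eq_mul]
              exact ENNReal.mul_inv_cancel
                (Nat.cast_ne_zero.mpr (Finset.card_pos.mpr hYne).ne')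
                (ENNReal.natCast_ne_top _)
        -- put it all together
        have hY0 : (Y.card : ENNReal) ≠ 0 :=
          Nat.cast_ne_zero.mpr (Finset.card_pos.mpr hYne).ne'
        have hYtop : (Y.card : ENNReal) ≠ ⊤ := ENNReal.natCast_ne_top _
        have hH0 : (((halves S).card : ℕ) : ENNReal) ≠ 0 :=
          Nat.cast_ne_zero.mpr (Finset.card_pos.mpr hne).ne'
        have hHtop : (((halves S).card : ℕ) : ENNReal) ≠ ⊤ := ENNReal.natCast_ne_top _
        have h1 : (Y.card : ENNReal) * (∑ A₀ ∈ halves S, v y A₀)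
            = ((halves S).card : ENNReal) := by
          rw [← stepC, Finset.sum_congr rfl stepB, Finset.sum_const, nsmul_eq_mul]
        have hg : (∑ A₀ ∈ halves S, v y A₀)
            = (Y.card : ENNReal)⁻¹ * ((halves S).card : ENNReal) := by
          rw [← h1, ← mul_assoc, ENNReal.inv_mul_cancel hY0 hYtop, one_mul]
        rw [stepA y hy, hg, ← mul_assoc, mul_comm (((halves S).card : ENNReal))⁻¹,
          mul_assoc, ENNReal.inv_mul_cancel hH0 hHtop, mul_one]
  intro S hY y hy
  exact (main S ⟨y, (mem_filter.mp hy).1⟩).2 hY y hy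
end
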